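/- Let A ∈ ℝ^{n×n} with A_sym := (A+Aᵀ)/2 positive definite, let ε > 0, and let U : ℝ → ℝ^{n×r} be differentiable on [0,∞), satisfy the Oja flow ε·(d/dt)U(t) = (I_n − U(t)U(t)ᵀ)·A·U(t) for all t ≥ 0, and have U(0) of full column rank r. Then U(t)ᵀU(t) converges to the identity matrix I_r as t → ∞ (equivalently, every singular value of U(t) tends to 1). -/

import Mathlib

/-!
Write `P = UᵀU`, `S = UᵀAU` and `M = 1 - P`. Along the Oja flow, `ε P' = SᵀM + MS`, and
`xᵀSx = (Ux)ᵀA(Ux) ≥ α xᵀPx`, where `α > 0` bounds the symmetric part of `A` from below.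

First, `P` stays uniformly positive definite. If `P - (c - δ (t + 1))` stopped being positive
definite, then at the first such time a kernel vector `v` would be an eigenvector of `P` with
eigenvalue `λ < 1`, so `ε vᵀP'v = 2 (1 - λ) vᵀSv ≥ 0` and the barrier would still be strictly
increasing along `v`. Letting `δ → 0` gives `P ≥ c` with `c = min (λ_min (P 0)) 1 > 0`.

Then `V = tr (M²)` satisfies `V' = -(2/ε) tr (M (S + Sᵀ) M) ≤ -(4αc/ε) V`, so `V → 0` by
Grönwall, that is `P → 1`.
-/

open Matrix Set Filter Topology

theorem IsMinOn.hasDerivWithinAt_Icc_nonpos {g : ℝ → ℝ} {d a b : ℝ} (hab : a < b)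
    (hg : HasDerivWithinAt g d (Icc a b) b) (hmin : IsMinOn g (Icc a b) b) : d ≤ 0 := by
  have hy : a - b ∈ posTangentConeAt (Icc a b) b :=
    sub_mem_posTangentConeAt_of_segment_subset (by rw [segment_symm, segment_eq_Icc hab.le])
  have := hmin.localize.hasFDerivWithinAt_nonneg hg.hasFDerivWithinAt hy
  rw [ContinuousLinearMap.toSpanSingleton_apply, smul_eq_mul] at this
  exact nonpos_of_mul_nonneg_right this (sub_neg.2 hab)

theorem tendsto_zero_of_hasDerivWithinAt_le_neg_mul {V V' : ℝ → ℝ} {k : ℝ} (hk : 0 < k)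
    (hV : ∀ t ≥ 0, HasDerivWithinAt V (V' t) (Ici 0) t) (hV' : ∀ t ≥ 0, V' t ≤ -k * V t)
    (hnonneg : ∀ t ≥ 0, 0 ≤ V t) : Tendsto V atTop (𝓝 0) := by
  have hbound : ∀ t ≥ 0, V t ≤ V 0 * Real.exp (-k * t) := fun t ht => by
    simpa [gronwallBound_ε0] using
      le_gronwallBound_of_liminf_deriv_right_le (K := -k) (ε := 0) (b := t)
        (fun x hx => (hV x hx.1).continuousWithinAt.mono Icc_subset_Ici_self)
        (fun x hx r hr => ((hV x hx.1).mono (Ici_subset_Ici.2 hx.1)).liminf_right_slope_le hr)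
        le_rfl (fun x hx => by simpa using hV' x hx.1) t ⟨ht, le_rfl⟩
  have hexp : Tendsto (fun t => V 0 * Real.exp (-k * t)) atTop (𝓝 0) := by
    simpa using (Real.tendsto_exp_atBot.comp
      (tendsto_id.const_mul_atTop_of_neg (neg_lt_zero.2 hk))).const_mul (V 0)
  exact squeeze_zero' (eventually_atTop.2 ⟨0, hnonneg⟩) (eventually_atTop.2 ⟨0, hbound⟩) hexp

theorem Matrix.mulVec_injective_of_rank_eq_card {m n : Type*} [Fintype n] {U : Matrix m n ℝ}
    (h : U.rank = Fintype.card n) : Function.Injective U.mulVec :=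
  mulVec_injective_iff.2 <| linearIndependent_iff_card_eq_finrank_span.2 <| by
    rw [← h, rank_eq_finrank_span_cols, Set.finrank]

section

variable {l m n : Type*} [Fintype m] {s : Set ℝ} {t : ℝ}

theorem hasDerivWithinAt_matrix_mul_apply {A : ℝ → Matrix l m ℝ} {B : ℝ → Matrix m n ℝ}
    {A' : Matrix l m ℝ} {B' : Matrix m n ℝ}
    (hA : ∀ i j, HasDerivWithinAt (fun s => A s i j) (A' i j) s t)
    (hB : ∀ i j, HasDerivWithinAt (fun s => B s i j) (B' i j) s t) (i : l) (k : n) :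
    HasDerivWithinAt (fun s => (A s * B s) i k) ((A' * B t + A t * B') i k) s t := by
  simp only [mul_apply, Matrix.add_apply, ← Finset.sum_add_distrib]
  exact HasDerivWithinAt.fun_sum fun j _ => (hA i j).fun_mul (hB j k)

theorem hasDerivWithinAt_dotProduct_mulVec {D : ℝ → Matrix m m ℝ} {D' : Matrix m m ℝ}
    (hD : ∀ i j, HasDerivWithinAt (fun s => D s i j) (D' i j) s t) (v w : m → ℝ) :
    HasDerivWithinAt (fun s => v ⬝ᵥ D s *ᵥ w) (v ⬝ᵥ D' *ᵥ w) s t := by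
  simp only [dotProduct, mulVec]
  exact HasDerivWithinAt.fun_sum fun i _ =>
    (HasDerivWithinAt.fun_sum fun j _ => (hD i j).mul_const (w j)).const_mul (v i)

theorem hasDerivWithinAt_trace {D : ℝ → Matrix m m ℝ} {D' : Matrix m m ℝ}
    (hD : ∀ i j, HasDerivWithinAt (fun s => D s i j) (D' i j) s t) :
    HasDerivWithinAt (fun s => trace (D s)) (trace D') s t :=
  HasDerivWithinAt.fun_sum fun i _ => hD i i

end

section

variable {l m n : Type*} [Fintype m]

theorem dotProduct_self_nonneg (x : m → ℝ) : 0 ≤ x ⬝ᵥ x := by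
  simpa only [star_trivial] using dotProduct_star_self_nonneg x

theorem dotProduct_self_pos {x : m → ℝ} (hx : x ≠ 0) : 0 < x ⬝ᵥ x := by
  simpa only [star_trivial] using dotProduct_star_self_pos_iff.2 hx

theorem dotProduct_sub_smul_one_mulVec [DecidableEq m] (P : Matrix m m ℝ) (a : ℝ) (x : m → ℝ) :
    x ⬝ᵥ (P - a • 1) *ᵥ x = x ⬝ᵥ P *ᵥ x - a * (x ⬝ᵥ x) := by
  rw [sub_mulVec, smul_mulVec, one_mulVec, dotProduct_sub, dotProduct_smul, smul_eq_mul]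

theorem dotProduct_transpose_mul_mul_mulVec [Fintype n] (U : Matrix m n ℝ) (A : Matrix m m ℝ)
    (x : n → ℝ) : x ⬝ᵥ (Uᵀ * A * U) *ᵥ x = (U *ᵥ x) ⬝ᵥ A *ᵥ (U *ᵥ x) := by
  rw [← mulVec_mulVec, ← mulVec_mulVec, dotProduct_mulVec, vecMul_transpose]

theorem dotProduct_transpose_mul_mulVec [Fintype n] (U : Matrix m n ℝ) (x : n → ℝ) :
    x ⬝ᵥ (Uᵀ * U) *ᵥ x = (U *ᵥ x) ⬝ᵥ (U *ᵥ x) := by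
  rw [← mulVec_mulVec, dotProduct_mulVec, vecMul_transpose]

theorem dotProduct_half_add_transpose_mulVec (A : Matrix m m ℝ) (x : m → ℝ) :
    x ⬝ᵥ ((2 : ℝ)⁻¹ • (A + Aᵀ)) *ᵥ x = x ⬝ᵥ A *ᵥ x := by
  rw [smul_mulVec, add_mulVec, dotProduct_smul, dotProduct_add, dotProduct_transpose_mulVec,
    smul_eq_mul]
  ring

open scoped MatrixOrder in
theorem Matrix.PosDef.exists_pos_mul_dotProduct_self_le [DecidableEq m] {A : Matrix m m ℝ}
    (hA : A.PosDef) : ∃ α > 0, ∀ x, α * (x ⬝ᵥ x) ≤ x ⬝ᵥ A *ᵥ x := by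
  cases isEmpty_or_nonempty m
  · exact ⟨1, one_pos, fun x => by simp [Subsingleton.elim x 0]⟩
  obtain ⟨α, hα, hαA⟩ := (CFC.exists_pos_algebraMap_le_iff hA.isHermitian.isSelfAdjoint).2
    fun x hx => hA.isStrictlyPositive.spectrum_pos hx
  refine ⟨α, hα, fun x => ?_⟩
  have := (Matrix.le_iff.1 hαA).dotProduct_mulVec_nonneg x
  simpa [Algebra.algebraMap_eq_smul_one, sub_mulVec, smul_mulVec, dotProduct_smul] using this

theorem Matrix.trace_mul_transpose_self [Fintype l] (M : Matrix l m ℝ) :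
    trace (M * Mᵀ) = ∑ i, M i ⬝ᵥ M i := by
  simp only [trace, diag, mul_apply, transpose_apply, dotProduct]

theorem Matrix.mul_trace_mul_transpose_le [Fintype l] {X : Matrix m m ℝ} {a : ℝ}
    (hX : ∀ x, a * (x ⬝ᵥ x) ≤ x ⬝ᵥ X *ᵥ x) (M : Matrix l m ℝ) :
    a * trace (M * Mᵀ) ≤ trace (M * X * Mᵀ) := by
  have hMXM : trace (M * X * Mᵀ) = ∑ i, M i ⬝ᵥ X *ᵥ M i := by
    simp only [trace, diag, mul_apply, transpose_apply, dotProduct, mulVec, Finset.mul_sum,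
      Finset.sum_mul]
    refine Finset.sum_congr rfl fun i _ => ?_
    rw [Finset.sum_comm]
    exact Finset.sum_congr rfl fun j _ => Finset.sum_congr rfl fun k _ => by ring
  rw [trace_mul_transpose_self, hMXM, Finset.mul_sum]
  exact Finset.sum_le_sum fun i _ => hX (M i)

theorem Matrix.sq_apply_le_trace_mul_transpose_self [Fintype l] (M : Matrix l m ℝ) (i : l)
    (j : m) : M i j ^ 2 ≤ trace (M * Mᵀ) := by
  rw [trace_mul_transpose_self]
  calc M i j ^ 2 ≤ M i ⬝ᵥ M i := (sq (M i j)).trans_le <|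
        Finset.single_le_sum (f := fun k => M i k * M i k) (fun k _ => mul_self_nonneg _)
          (Finset.mem_univ j)
    _ ≤ ∑ k, M k ⬝ᵥ M k :=
        Finset.single_le_sum (f := fun k => M k ⬝ᵥ M k) (fun k _ => dotProduct_self_nonneg (M k))
          (Finset.mem_univ i)

theorem tendsto_zero_of_tendsto_trace_mul_transpose_self [Fintype l] {α : Type*} {f : Filter α}
    {M : α → Matrix l m ℝ} (hM : Tendsto (fun a => trace (M a * (M a)ᵀ)) f (𝓝 0)) :
    Tendsto M f (𝓝 0) := by
  refine tendsto_pi_nhds.2 fun i => tendsto_pi_nhds.2 fun j => ?_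
  refine squeeze_zero_norm (fun a => ?_) (by simpa using hM.sqrt)
  exact Real.abs_le_sqrt (sq_apply_le_trace_mul_transpose_self (M a) i j)

theorem Matrix.posDef_iff_forall_mem_sphere {M : Matrix m m ℝ} (hM : M.IsHermitian) :
    M.PosDef ↔ ∀ v ∈ Metric.sphere (0 : m → ℝ) 1, 0 < v ⬝ᵥ M *ᵥ v := by
  simp only [posDef_iff_dotProduct_mulVec, star_trivial, hM, true_and]
  refine ⟨fun h v hv => h fun h0 => by simp [h0] at hv, fun h x hx => ?_⟩
  have hpos := h (‖x‖⁻¹ • x) (by simpa using norm_smul_inv_norm (𝕜 := ℝ) hx)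
  rw [mulVec_smul, dotProduct_smul, smul_dotProduct, smul_eq_mul, smul_eq_mul] at hpos
  have : 0 < ‖x‖⁻¹ := inv_pos.2 (norm_pos_iff.2 hx)
  exact pos_of_mul_pos_right (pos_of_mul_pos_right hpos this.le) this.le

theorem isClosed_setOf_exists_mem_sphere_dotProduct_mulVec_nonpos {D : ℝ → Matrix m m ℝ}
    (hD : ContinuousOn D (Ici 0)) :
    IsClosed {t | 0 ≤ t ∧ ∃ v ∈ Metric.sphere (0 : m → ℝ) 1, v ⬝ᵥ D t *ᵥ v ≤ 0} := by
  have : CompactSpace (Metric.sphere (0 : m → ℝ) 1) :=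
    isCompact_iff_compactSpace.1 (isCompact_sphere 0 1)
  have hq : ContinuousOn
      (fun p : ℝ × Metric.sphere (0 : m → ℝ) 1 => (p.2 : m → ℝ) ⬝ᵥ D p.1 *ᵥ p.2)
      (Ici 0 ×ˢ univ) := by
    have hform : Continuous fun q : Matrix m m ℝ × (m → ℝ) => q.2 ⬝ᵥ q.1 *ᵥ q.2 :=
      continuous_snd.dotProduct (continuous_fst.matrix_mulVec continuous_snd)
    refine hform.comp_continuousOn (ContinuousOn.prodMk ?_ ?_)
    · exact hD.comp continuousOn_fst fun p hp => hp.1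
    · exact (continuous_subtype_val.comp continuous_snd).continuousOn
  convert isClosedMap_fst_of_compactSpace _ (hq.preimage_isClosed_of_isClosed
    (isClosed_Ici.prod isClosed_univ) (isClosed_Iic (a := (0 : ℝ))))
  ext t
  simp [and_assoc]

theorem exists_first_not_posDef {D : ℝ → Matrix m m ℝ} (hsymm : ∀ t, (D t).IsHermitian)
    (hD : ContinuousOn D (Ici 0)) (h0 : (D 0).PosDef) {t : ℝ} (ht : 0 ≤ t)
    (hnot : ¬(D t).PosDef) :
    ∃ t₁ > 0, (∀ s ∈ Ico 0 t₁, (D s).PosDef) ∧ ∃ v ≠ 0, v ⬝ᵥ D t₁ *ᵥ v ≤ 0 := by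
  set bad := {t | 0 ≤ t ∧ ∃ v ∈ Metric.sphere (0 : m → ℝ) 1, v ⬝ᵥ D t *ᵥ v ≤ 0}
  have hgood : ∀ t ≥ 0, t ∉ bad → (D t).PosDef := fun t ht hbad =>
    (posDef_iff_forall_mem_sphere (hsymm t)).2 fun v hv => not_le.1 fun h => hbad ⟨ht, v, hv, h⟩
  have hbdd : BddBelow bad := ⟨0, fun _ h => h.1⟩
  obtain ⟨ht₁, v, hv, hv₁⟩ : sInf bad ∈ bad :=
    (isClosed_setOf_exists_mem_sphere_dotProduct_mulVec_nonpos hD).csInf_mem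
      ⟨t, by_contra fun h => hnot (hgood t ht h)⟩ hbdd
  have hv0 : v ≠ 0 := fun h0 => by simp [h0] at hv
  refine ⟨sInf bad, ht₁.lt_of_ne fun h => ?_,
    fun s hs => hgood s hs.1 fun h => (csInf_le hbdd h).not_gt hs.2, v, hv0, hv₁⟩
  rw [← h] at hv₁
  exact hv₁.not_gt (by simpa using h0.dotProduct_mulVec_pos hv0)

theorem posDef_of_hasDerivWithinAt {D D' : ℝ → Matrix m m ℝ} (hsymm : ∀ t, (D t).IsHermitian)
    (hD : ∀ t ≥ 0, ∀ i j, HasDerivWithinAt (fun s => D s i j) (D' t i j) (Ici 0) t)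
    (h0 : (D 0).PosDef)
    (hD' : ∀ t > 0, (D t).PosSemidef → ∀ v ≠ 0, D t *ᵥ v = 0 → 0 < v ⬝ᵥ D' t *ᵥ v) :
    ∀ t ≥ 0, (D t).PosDef := by
  by_contra! ⟨t, ht, hnot⟩
  have hcont : ContinuousOn D (Ici 0) := fun t ht => continuousWithinAt_pi.2 fun i =>
    continuousWithinAt_pi.2 fun j => (hD t ht i j).continuousWithinAt
  obtain ⟨t₁, ht₁, hbefore, v, hv0, hv₁⟩ := exists_first_not_posDef hsymm hcont h0 ht hnot
  have hform : ∀ x, HasDerivWithinAt (fun s => x ⬝ᵥ D s *ᵥ x) (x ⬝ᵥ D' t₁ *ᵥ x) (Ici 0) t₁ :=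
    fun x => hasDerivWithinAt_dotProduct_mulVec (hD t₁ ht₁.le) x x
  have hpsd : (D t₁).PosSemidef := by
    refine .of_dotProduct_mulVec_nonneg (hsymm t₁) fun x => ?_
    have : (𝓝[Ico 0 t₁] t₁).NeBot := right_nhdsWithin_Ico_neBot ht₁
    refine ge_of_tendsto
      ((hform x).continuousWithinAt.mono (Ico_subset_Ici_self : Ico 0 t₁ ⊆ _)).tendsto ?_
    filter_upwards [self_mem_nhdsWithin] with s hs
    exact (hbefore s hs).posSemidef.dotProduct_mulVec_nonneg x
  have hzero : v ⬝ᵥ D t₁ *ᵥ v = 0 :=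
    le_antisymm hv₁ (by simpa using hpsd.dotProduct_mulVec_nonneg v)
  have hker : D t₁ *ᵥ v = 0 := (hpsd.dotProduct_mulVec_zero_iff v).1 (by simpa using hzero)
  have hmin : IsMinOn (fun s => v ⬝ᵥ D s *ᵥ v) (Icc 0 t₁) t₁ := isMinOn_iff.2 fun s hs => by
    rcases hs.2.lt_or_eq with hlt | heq
    · simpa [hzero] using ((hbefore s ⟨hs.1, hlt⟩).dotProduct_mulVec_pos hv0).le
    · rw [heq]
  exact (hD' t₁ ht₁ hpsd v hv0 hker).not_ge
    (hmin.hasDerivWithinAt_Icc_nonpos ht₁ ((hform v).mono Icc_subset_Ici_self))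

end

section

variable {m n : Type*} [Fintype m] [DecidableEq m]

theorem dotProduct_mul_one_sub_add_mulVec_of_mulVec_eq_smul {P S : Matrix m m ℝ} (hP : Pᵀ = P)
    {v : m → ℝ} {μ : ℝ} (hv : P *ᵥ v = μ • v) :
    v ⬝ᵥ (Sᵀ * (1 - P) + (1 - P) * S) *ᵥ v = 2 * (1 - μ) * (v ⬝ᵥ S *ᵥ v) := by
  have hMv : (1 - P) *ᵥ v = (1 - μ) • v := by
    rw [sub_mulVec, one_mulVec, hv, sub_smul, one_smul]
  have hvM : v ᵥ* (1 - P) = (1 - μ) • v := by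
    rw [← mulVec_transpose, transpose_sub, transpose_one, hP, hMv]
  rw [add_mulVec, dotProduct_add, ← mulVec_mulVec, ← mulVec_mulVec, hMv, mulVec_smul,
    dotProduct_smul, dotProduct_transpose_mulVec, dotProduct_mulVec v (1 - P), hvM,
    smul_dotProduct, smul_eq_mul]
  ring

def IsOjaGramFlow (ε : ℝ) (P S : ℝ → Matrix m m ℝ) : Prop :=
  ∀ t ≥ 0, ∀ i j, HasDerivWithinAt (fun s => P s i j)
    ((ε⁻¹ • ((S t)ᵀ * (1 - P t) + (1 - P t) * S t)) i j) (Ici 0) t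

namespace IsOjaGramFlow

variable {ε : ℝ} {P S : ℝ → Matrix m m ℝ}

/-- The margin `δ (t + 1)` turns `vᵀP'v ≥ 0` on eigenvectors of `P` into a strictly positive
derivative of the barrier on its kernel. -/
theorem posDef_sub_smul_one (hflow : IsOjaGramFlow ε P S) (hε : 0 < ε)
    (hP : ∀ t, (P t)ᵀ = P t) (hS : ∀ t ≥ 0, ∀ x, 0 ≤ x ⬝ᵥ S t *ᵥ x) {c : ℝ} (hc : c ≤ 1)
    (h0 : ∀ x, c * (x ⬝ᵥ x) ≤ x ⬝ᵥ P 0 *ᵥ x) {δ : ℝ} (hδ : 0 < δ) :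
    ∀ t ≥ 0, (P t - (c - δ * (t + 1)) • 1).PosDef := by
  have hsymm : ∀ t (a : ℝ), (P t - a • 1).IsHermitian := fun t a => by
    rw [IsHermitian, conjTranspose_eq_transpose_of_trivial, transpose_sub, transpose_smul,
      transpose_one, hP]
  refine posDef_of_hasDerivWithinAt
    (D' := fun t => ε⁻¹ • ((S t)ᵀ * (1 - P t) + (1 - P t) * S t) + δ • 1)
    (fun t => hsymm t _) (fun t ht i j => ?_) ?_ (fun t ht _ v hv hker => ?_)
  · have hmargin : HasDerivWithinAt (fun s => (c - δ * (s + 1)) * (1 : Matrix m m ℝ) i j)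
        (-(δ * 1) * (1 : Matrix m m ℝ) i j) (Ici 0) t :=
      ((((hasDerivAt_id t).add_const 1).const_mul δ).const_sub c).hasDerivWithinAt.mul_const _
    simpa [mul_add] using (hflow t ht i j).fun_sub hmargin
  · refine posDef_iff_dotProduct_mulVec.2 ⟨hsymm 0 _, fun x hx => ?_⟩
    rw [star_trivial, dotProduct_sub_smul_one_mulVec]
    nlinarith [h0 x, dotProduct_self_pos hx]
  · have heig : P t *ᵥ v = (c - δ * (t + 1)) • v := by
      rwa [sub_mulVec, smul_mulVec, one_mulVec, sub_eq_zero] at hker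
    have hflux : 0 ≤ ε⁻¹ * (2 * (1 - (c - δ * (t + 1))) * (v ⬝ᵥ S t *ᵥ v)) := by
      have : 0 < 1 - (c - δ * (t + 1)) := by nlinarith
      have := hS t ht.le v
      positivity
    rw [add_mulVec, dotProduct_add, smul_mulVec, dotProduct_smul,
      dotProduct_mul_one_sub_add_mulVec_of_mulVec_eq_smul (hP t) heig, smul_mulVec, one_mulVec,
      dotProduct_smul, smul_eq_mul, smul_eq_mul]
    exact add_pos_of_nonneg_of_pos hflux (mul_pos hδ (dotProduct_self_pos hv))

theorem mul_dotProduct_self_le (hflow : IsOjaGramFlow ε P S) (hε : 0 < ε)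
    (hP : ∀ t, (P t)ᵀ = P t) (hS : ∀ t ≥ 0, ∀ x, 0 ≤ x ⬝ᵥ S t *ᵥ x) {c : ℝ} (hc : c ≤ 1)
    (h0 : ∀ x, c * (x ⬝ᵥ x) ≤ x ⬝ᵥ P 0 *ᵥ x) :
    ∀ t ≥ 0, ∀ x, c * (x ⬝ᵥ x) ≤ x ⬝ᵥ P t *ᵥ x := by
  intro t ht x
  have hlim : Tendsto (fun δ => (c - δ * (t + 1)) * (x ⬝ᵥ x)) (𝓝[>] 0) (𝓝 (c * (x ⬝ᵥ x))) := by
    have : Continuous fun δ : ℝ => (c - δ * (t + 1)) * (x ⬝ᵥ x) := by fun_prop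
    simpa using (this.tendsto 0).mono_left nhdsWithin_le_nhds
  refine le_of_tendsto hlim (eventually_nhdsWithin_of_forall fun δ hδ => ?_)
  have := (hflow.posDef_sub_smul_one hε hP hS hc h0 hδ t ht).posSemidef.dotProduct_mulVec_nonneg x
  rw [star_trivial, dotProduct_sub_smul_one_mulVec] at this
  linarith

theorem hasDerivWithinAt_trace_one_sub_mul_one_sub (hflow : IsOjaGramFlow ε P S) :
    ∀ t ≥ 0, HasDerivWithinAt (fun s => trace ((1 - P s) * (1 - P s)))
      (-(2 * ε⁻¹) * trace ((1 - P t) * (S t + (S t)ᵀ) * (1 - P t))) (Ici 0) t := by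
  intro t ht
  set M := 1 - P t
  set G := ε⁻¹ • ((S t)ᵀ * M + M * S t)
  have hM : ∀ i j, HasDerivWithinAt (fun s => (1 - P s) i j) ((-G) i j) (Ici 0) t := fun i j =>
    ((hflow t ht i j).const_sub ((1 : Matrix m m ℝ) i j)).congr_deriv (by
      simp only [G, M, Matrix.neg_apply, Matrix.smul_apply, Matrix.add_apply, smul_eq_mul])
  refine (hasDerivWithinAt_trace (hasDerivWithinAt_matrix_mul_apply hM hM)).congr_deriv ?_
  simp only [G, neg_mul, mul_neg, Matrix.smul_mul, Matrix.mul_smul, Matrix.add_mul,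
    Matrix.mul_add, trace_add, trace_neg, trace_smul, ← Matrix.mul_assoc, smul_eq_mul]
  rw [trace_mul_cycle (S t)ᵀ M M, ← trace_mul_cycle M (S t) M]
  ring

theorem tendsto_one (hflow : IsOjaGramFlow ε P S) (hε : 0 < ε) (hP : ∀ t, (P t)ᵀ = P t)
    {α c : ℝ} (hα : 0 < α) (hc : 0 < c)
    (hS : ∀ t ≥ 0, ∀ x, α * (x ⬝ᵥ P t *ᵥ x) ≤ x ⬝ᵥ S t *ᵥ x)
    (hP_ge : ∀ t ≥ 0, ∀ x, c * (x ⬝ᵥ x) ≤ x ⬝ᵥ P t *ᵥ x) : Tendsto P atTop (𝓝 1) := by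
  have hMT : ∀ t, (1 - P t)ᵀ = 1 - P t := fun t => by rw [transpose_sub, transpose_one, hP]
  have hcoer : ∀ t ≥ 0, ∀ x, 2 * α * c * (x ⬝ᵥ x) ≤ x ⬝ᵥ (S t + (S t)ᵀ) *ᵥ x := by
    intro t ht x
    rw [add_mulVec, dotProduct_add, dotProduct_transpose_mulVec]
    nlinarith [hS t ht x, mul_le_mul_of_nonneg_left (hP_ge t ht x) hα.le]
  have hdecay : ∀ t ≥ 0, -(2 * ε⁻¹) * trace ((1 - P t) * (S t + (S t)ᵀ) * (1 - P t))
      ≤ -(4 * α * c / ε) * trace ((1 - P t) * (1 - P t)) := by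
    intro t ht
    have hlow := mul_trace_mul_transpose_le (hcoer t ht) (1 - P t)
    rw [hMT] at hlow
    calc -(2 * ε⁻¹) * trace ((1 - P t) * (S t + (S t)ᵀ) * (1 - P t))
        ≤ -(2 * ε⁻¹) * (2 * α * c * trace ((1 - P t) * (1 - P t))) :=
          mul_le_mul_of_nonpos_left hlow (by have := inv_pos.2 hε; linarith)
      _ = -(4 * α * c / ε) * trace ((1 - P t) * (1 - P t)) := by ring
  have hnonneg : ∀ t ≥ 0, 0 ≤ trace ((1 - P t) * (1 - P t)) := fun t _ => by
    have htrace := trace_mul_transpose_self (1 - P t)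
    rw [hMT] at htrace
    rw [htrace]
    exact Finset.sum_nonneg fun i _ => dotProduct_self_nonneg _
  have hM : Tendsto (fun t => 1 - P t) atTop (𝓝 0) :=
    tendsto_zero_of_tendsto_trace_mul_transpose_self <| by
      simpa only [hMT] using tendsto_zero_of_hasDerivWithinAt_le_neg_mul (by positivity)
        hflow.hasDerivWithinAt_trace_one_sub_mul_one_sub hdecay hnonneg
  simpa using (tendsto_const_nhds (x := (1 : Matrix m m ℝ))).sub hM

end IsOjaGramFlow

variable [Fintype n] [DecidableEq n]

theorem oja_gram_identity (A : Matrix m m ℝ) (U : Matrix m n ℝ) :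
    ((1 - U * Uᵀ) * A * U)ᵀ * U + Uᵀ * ((1 - U * Uᵀ) * A * U)
      = (Uᵀ * A * U)ᵀ * (1 - Uᵀ * U) + (1 - Uᵀ * U) * (Uᵀ * A * U) := by
  simp only [transpose_mul, transpose_sub, transpose_transpose, Matrix.sub_mul,
    Matrix.mul_sub, Matrix.one_mul, Matrix.mul_one, Matrix.mul_assoc]

theorem isOjaGramFlow_of_hasDerivWithinAt {A : Matrix m m ℝ} {ε : ℝ} (hε : ε ≠ 0)
    {U U' : ℝ → Matrix m n ℝ}
    (hderiv : ∀ t ≥ 0, ∀ i j, HasDerivWithinAt (fun s => U s i j) (U' t i j) (Ici 0) t)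
    (hode : ∀ t ≥ 0, ε • U' t = (1 - U t * (U t)ᵀ) * A * U t) :
    IsOjaGramFlow ε (fun t => (U t)ᵀ * U t) (fun t => (U t)ᵀ * A * U t) := by
  intro t ht i j
  have hU' : U' t = ε⁻¹ • ((1 - U t * (U t)ᵀ) * A * U t) := by
    rw [← hode t ht, smul_smul, inv_mul_cancel₀ hε, one_smul]
  convert hasDerivWithinAt_matrix_mul_apply (A := fun s => (U s)ᵀ) (A' := (U' t)ᵀ)
    (fun i j => hderiv t ht j i) (hderiv t ht) i j using 2
  rw [hU', ← oja_gram_identity, transpose_smul, Matrix.smul_mul, Matrix.mul_smul, smul_add]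

end

theorem oja_flow_singular_values_tend_to_one
    (n r : ℕ)
    (A : Matrix (Fin n) (Fin n) ℝ)
    (hA : (((2:ℝ)⁻¹) • (A + Aᵀ)).PosDef)
    (ε : ℝ) (hε : 0 < ε)
    (U U' : ℝ → Matrix (Fin n) (Fin r) ℝ)
    (hderiv : ∀ t ∈ Set.Ici (0:ℝ), ∀ i j,
      HasDerivWithinAt (fun s => U s i j) (U' t i j) (Set.Ici (0:ℝ)) t)
    (hode : ∀ t ∈ Set.Ici (0:ℝ),
      ε • U' t = (1 - U t * (U t)ᵀ) * A * U t)
    (hrank0 : (U 0).rank = r) :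
    Filter.Tendsto (fun t => (U t)ᵀ * U t) Filter.atTop
      (nhds (1 : Matrix (Fin r) (Fin r) ℝ)) := by
  have hflow := isOjaGramFlow_of_hasDerivWithinAt hε.ne' hderiv hode
  have hsymm : ∀ t, ((U t)ᵀ * U t)ᵀ = (U t)ᵀ * U t := fun t => by
    rw [transpose_mul, transpose_transpose]
  obtain ⟨α, hα, hαA⟩ := hA.exists_pos_mul_dotProduct_self_le
  simp only [dotProduct_half_add_transpose_mulVec] at hαA
  have hS : ∀ t ≥ 0, ∀ x, α * (x ⬝ᵥ ((U t)ᵀ * U t) *ᵥ x) ≤ x ⬝ᵥ ((U t)ᵀ * A * U t) *ᵥ x := by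
    intro t _ x
    rw [dotProduct_transpose_mul_mulVec, dotProduct_transpose_mul_mul_mulVec]
    exact hαA _
  have hS_nonneg : ∀ t ≥ 0, ∀ x, 0 ≤ x ⬝ᵥ ((U t)ᵀ * A * U t) *ᵥ x := fun t _ x => by
    rw [dotProduct_transpose_mul_mul_mulVec]
    exact (mul_nonneg hα.le (dotProduct_self_nonneg _)).trans (hαA _)
  obtain ⟨c, hc, hcP⟩ := (PosDef.conjTranspose_mul_self (U 0)
    (mulVec_injective_of_rank_eq_card (by simpa using hrank0))).exists_pos_mul_dotProduct_self_le
  have hP0 : ∀ x, min c 1 * (x ⬝ᵥ x) ≤ x ⬝ᵥ ((U 0)ᵀ * U 0) *ᵥ x := fun x =>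
    (mul_le_mul_of_nonneg_right (min_le_left c 1) (dotProduct_self_nonneg x)).trans
      (by simpa [conjTranspose_eq_transpose_of_trivial] using hcP x)
  exact hflow.tendsto_one hε hsymm hα (lt_min hc one_pos) hS
    (hflow.mul_dotProduct_self_le hε hsymm hS_nonneg (min_le_right c 1) hP0)
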